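/- There is an absolute constant c > 0 such that in the herald-protocol round model, for every vertex u and every integer k ≥ 1, the probability that at least one vertex of N^k(u) receives a message is at most c · π_ℓ · α(G[N^k(u)]). -/

import Mathlib

open Finset

/-- The action a vertex takes in one round: `none` is idle, `some (i, false)` is listening on
channel `i+1`, and `some (i, true)` is broadcasting on channel `i+1` (channels are numbered
`1, …, nA`). -/
abbrev Act (nA : ℕ) := Option (Fin nA × Bool)

/-- The probability of each action in the herald-protocol round model, for a vertex with
activity `g` and listening probability `p`: on channel `i+1` the vertex listens with
probability `p·g·2^{-(i+1)}` and broadcasts with probability `(1−p)·g·2^{-(i+1)}`; with the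
remaining probability it is idle. -/
noncomputable def actProb (nA : ℕ) (p g : ℝ) : Act nA → ℝ
  | some (i, false) => p * g * (2 : ℝ) ^ (-((i.1 : ℤ) + 1))
  | some (i, true) => (1 - p) * g * (2 : ℝ) ^ (-((i.1 : ℤ) + 1))
  | none => 1 - ∑ i : Fin nA, g * (2 : ℝ) ^ (-((i.1 : ℤ) + 1))

open Classical in
/-- The probability of an event `E` in one round of the herald-protocol round model, where all
vertices choose their actions independently. -/
noncomputable def roundPr {V : Type*} [Fintype V] [DecidableEq V] (nA : ℕ) (p : ℝ)
    (γ : V → ℝ) (E : (V → Act nA) → Prop) : ℝ :=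
  ∑ f : V → Act nA, if E f then ∏ v, actProb nA p (γ v) (f v) else 0

/-- `v` listens on channel `i` (i.e. channel number `i+1`). -/
def listens {V : Type*} {nA : ℕ} (f : V → Act nA) (v : V) (i : Fin nA) : Prop :=
  f v = some (i, false)

/-- `v` broadcasts on channel `i` (i.e. channel number `i+1`). -/
def broadcasts {V : Type*} {nA : ℕ} (f : V → Act nA) (v : V) (i : Fin nA) : Prop :=
  f v = some (i, true)

/-- `v` operates (listens or broadcasts) on channel `i`. -/
def operates {V : Type*} {nA : ℕ} (f : V → Act nA) (v : V) (i : Fin nA) : Prop :=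
  listens f v i ∨ broadcasts f v i

open Classical in
/-- `v` receives a message on channel `i`: it listens on channel `i` and exactly one of its
neighbors broadcasts on channel `i`. -/
def receivesOn {V : Type*} [Fintype V] [DecidableEq V] (G : SimpleGraph V)
    [DecidableRel G.Adj] {nA : ℕ} (f : V → Act nA) (v : V) (i : Fin nA) : Prop :=
  listens f v i ∧ ((G.neighborFinset v).filter fun w => broadcasts f w i).card = 1

/-- `v` receives a message (on some channel). -/
def receives {V : Type*} [Fintype V] [DecidableEq V] (G : SimpleGraph V)
    [DecidableRel G.Adj] {nA : ℕ} (f : V → Act nA) (v : V) : Prop :=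
  ∃ i : Fin nA, receivesOn G f v i

/-- `ball G u k` is the set `N^k(u)` of vertices at distance at most `k` from `u` in `G`
(including `u` itself). -/
def ball {V : Type*} (G : SimpleGraph V) (u : V) (k : ℕ) : Set V :=
  {v | ∃ p : G.Walk u v, p.length ≤ k}

/-- The independence number of the subgraph of `G` induced by a vertex set `S`. -/
noncomputable def indepNumOn {V : Type*} [Fintype V] (G : SimpleGraph V) (S : Set V) : ℕ :=
  sSup {n | ∃ s : Finset V, ↑s ⊆ S ∧ (∀ a ∈ s, ∀ b ∈ s, a ≠ b → ¬ G.Adj a b) ∧ s.card = n}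

/-- `Γ(x) = ∑_{y ∈ N(x) ∪ {x}} γ(y)`. -/
noncomputable def Gam {V : Type*} [Fintype V] [DecidableEq V] (G : SimpleGraph V)
    [DecidableRel G.Adj] (γ : V → ℝ) (x : V) : ℝ :=
  ∑ y ∈ insert x (G.neighborFinset x), γ y

/-- `Γ°(x) = ∑_{y ∈ N(x)} γ(y)`. -/
noncomputable def GamO {V : Type*} [Fintype V] [DecidableEq V] (G : SimpleGraph V)
    [DecidableRel G.Adj] (γ : V → ℝ) (x : V) : ℝ :=
  ∑ y ∈ G.neighborFinset x, γ y
/-!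
Fix a vertex `x` and a channel `i`, and put `t = 2^{-(i+1)}`. If `x` receives on channel `i`, then
`x` listens there and exactly one neighbour `w` broadcasts there; summing over `w` bounds the
probability by `2 π_ℓ γ(x) · t · s e^{-s}` with `s = (1 - π_ℓ) Γ°(x) t`. Summed over the
channels, the dyadic sum `∑ t · s e^{-s}` is at most `1`, and at most `50 / ((1 - π_ℓ) Γ°(x))` by
telescoping against `s ↦ s / (1 + s)`. Hence `x` receives with probability at most
`201 π_ℓ γ(x) / Γ(x)`. A union bound over `S = N^k(u)` and the weighted Caro–Wei inequality
`∑_{x ∈ S} γ(x) / Γ_S(x) ≤ α(G[S])`, where `Γ_S` only counts the closed neighbourhood inside `S`,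
finish the argument.
-/

open Real

lemma two_zpow_neg_succ (i : ℕ) : (2 : ℝ) ^ (-((i : ℤ) + 1)) = (1 / 2) ^ (i + 1) := by
  rw [zpow_neg, ← Nat.cast_succ, zpow_natCast, one_div, inv_pow]

lemma sum_range_half_pow_succ_le_one (n : ℕ) : ∑ i ∈ range n, (1 / 2 : ℝ) ^ (i + 1) ≤ 1 := by
  have := sum_geometric_two_le n
  simp_rw [pow_succ, ← sum_mul]
  linarith

lemma sum_two_zpow_neg_succ_le_one (n : ℕ) : ∑ i : Fin n, (2 : ℝ) ^ (-((i.1 : ℤ) + 1)) ≤ 1 := by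
  simpa only [two_zpow_neg_succ, Fin.sum_univ_eq_sum_range (fun i => (1 / 2 : ℝ) ^ (i + 1))]
    using sum_range_half_pow_succ_le_one n

lemma div_sum_le_div_sum_of_subset {ι : Type*} {f : ι → ℝ} (hf : ∀ i, 0 ≤ f i) {s t : Finset ι}
    (hst : s ⊆ t) {a : ι} (ha : a ∈ s) : f a / ∑ i ∈ t, f i ≤ f a / ∑ i ∈ s, f i := by
  rcases (hf a).eq_or_lt with h | h
  · simp [← h]
  · exact div_le_div_of_nonneg_left (hf a) (h.trans_le (single_le_sum (fun i _ => hf i) ha))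
      (sum_le_sum_of_subset_of_nonneg hst fun i _ _ => hf i)

lemma prod_erase_one_sub_le_two_mul_exp {ι : Type*} [DecidableEq ι] {s : Finset ι} {q : ι → ℝ}
    (hq : ∀ v ∈ s, q v ≤ 1 / 4) {w : ι} (hw : w ∈ s) :
    ∏ v ∈ s.erase w, (1 - q v) ≤ 2 * exp (-∑ v ∈ s, q v) := by
  have hqw : exp (q w) ≤ 2 := by
    calc exp (q w) ≤ exp (log 2) := exp_le_exp.2 (by linarith [hq w hw, log_two_gt_d9])
      _ = 2 := exp_log two_pos
  calc ∏ v ∈ s.erase w, (1 - q v) ≤ ∏ v ∈ s.erase w, exp (-q v) :=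
        prod_le_prod (fun v hv => by linarith [hq v (mem_of_mem_erase hv)])
          fun v _ => one_sub_le_exp_neg (q v)
    _ = exp (q w) * exp (-∑ v ∈ s, q v) := by
        rw [← exp_sum, sum_neg_distrib, sum_erase_eq_sub hw, ← exp_add]
        ring_nf
    _ ≤ 2 * exp (-∑ v ∈ s, q v) := by gcongr

section DyadicSum

noncomputable def dyadicExpSum (n : ℕ) (r : ℝ) : ℝ :=
  ∑ i ∈ range n, (1 / 2) ^ (i + 1) * (r * (1 / 2) ^ (i + 1) * exp (-(r * (1 / 2) ^ (i + 1))))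

lemma dyadicExpSum_nonneg (n : ℕ) {r : ℝ} (hr : 0 ≤ r) : 0 ≤ dyadicExpSum n r :=
  sum_nonneg fun _ _ => by positivity

lemma dyadicExpSum_le_one (n : ℕ) (r : ℝ) : dyadicExpSum n r ≤ 1 := by
  have hφ (y : ℝ) : y * exp (-y) ≤ 1 :=
    (mul_exp_neg_le_exp_neg_one y).trans (exp_le_one_iff.2 (by norm_num))
  calc dyadicExpSum n r ≤ ∑ i ∈ range n, (1 / 2 : ℝ) ^ (i + 1) * 1 :=
        sum_le_sum fun i _ => by gcongr; exact hφ _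
    _ ≤ 1 := by simpa using sum_range_half_pow_succ_le_one n

lemma sq_mul_exp_neg_le_sub {s : ℝ} (hs : 0 ≤ s) :
    s ^ 2 * exp (-s) ≤ 50 * (s / (1 + s)) - 50 * (s / 2 / (1 + s / 2)) := by
  have hexp2 : exp 2 < 7.4 := by
    have := exp_one_lt_d9
    rw [show (2 : ℝ) = 1 + 1 by norm_num, exp_add]
    nlinarith [exp_pos 1]
  have hcube : (s + 2) ^ 3 / 6 ≤ exp s * exp 2 := by
    rw [← exp_add]
    simpa [Nat.factorial] using pow_div_factorial_le_exp (s + 2) (by linarith) 3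
  -- `s (1 + s) (2 + s) ≤ (s + 2)^3 ≤ 3! e^{s+2}` and `6 e² < 50`
  have hpoly : s * (1 + s) * (2 + s) ≤ 50 * exp s := by nlinarith [exp_pos s]
  have hdiff : 50 * (s / (1 + s)) - 50 * (s / 2 / (1 + s / 2)) = 50 * s / ((1 + s) * (2 + s)) := by
    field_simp
    ring
  rw [hdiff, le_div_iff₀ (by positivity)]
  calc s ^ 2 * exp (-s) * ((1 + s) * (2 + s)) = s * exp (-s) * (s * (1 + s) * (2 + s)) := by ring
    _ ≤ s * exp (-s) * (50 * exp s) := by gcongr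
    _ = 50 * s := by rw [exp_neg]; field_simp

lemma mul_dyadicExpSum_le (n : ℕ) {r : ℝ} (hr : 0 ≤ r) : r * dyadicExpSum n r ≤ 50 := by
  set g : ℕ → ℝ := fun i => 50 * (r * (1 / 2) ^ (i + 1) / (1 + r * (1 / 2) ^ (i + 1)))
  calc r * dyadicExpSum n r
      = ∑ i ∈ range n, (r * (1 / 2) ^ (i + 1)) ^ 2 * exp (-(r * (1 / 2) ^ (i + 1))) := by
        rw [dyadicExpSum, mul_sum]
        exact sum_congr rfl fun i _ => by ring
    _ ≤ ∑ i ∈ range n, (g i - g (i + 1)) := sum_le_sum fun i _ => by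
        have h := sq_mul_exp_neg_le_sub (s := r * (1 / 2) ^ (i + 1)) (by positivity)
        rwa [show r * (1 / 2) ^ (i + 1) / 2 = r * (1 / 2) ^ (i + 1 + 1) by ring] at h
    _ = g 0 - g n := sum_range_sub' g n
    _ ≤ 50 := by
        have h0 : g 0 ≤ 50 := by
          have : r * (1 / 2) ^ 1 / (1 + r * (1 / 2) ^ 1) ≤ 1 :=
            div_le_one_of_le₀ (by linarith) (by positivity)
          simp only [g]
          linarith
        have hn : 0 ≤ g n := by positivity
        linarith

end DyadicSum

section ActionDistribution

variable {nA : ℕ} {p g : ℝ}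

lemma actProb_sum : ∑ a : Act nA, actProb nA p g a = 1 := by
  simp only [Fintype.sum_option, Fintype.sum_prod_type, Fintype.sum_bool, actProb]
  simp_rw [← add_mul, sub_add_cancel, one_mul]
  exact sub_add_cancel 1 _

lemma actProb_nonneg (hp0 : 0 ≤ p) (hp1 : p ≤ 1) (hg0 : 0 ≤ g) (hg1 : g ≤ 1) (a : Act nA) :
    0 ≤ actProb nA p g a := by
  rcases a with _ | ⟨i, _ | _⟩
  · have : ∑ i : Fin nA, g * (2 : ℝ) ^ (-((i.1 : ℤ) + 1)) ≤ g * 1 := by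
      rw [← mul_sum]
      exact mul_le_mul_of_nonneg_left (sum_two_zpow_neg_succ_le_one nA) hg0
    simp only [actProb]
    linarith
  · simp only [actProb]; positivity
  · have : 0 ≤ 1 - p := by linarith
    simp only [actProb]; positivity

end ActionDistribution

section RoundProbability

variable {V : Type*} [Fintype V] [DecidableEq V] {nA : ℕ} {p : ℝ} {γ : V → ℝ}

lemma roundPr_le_sum {ι : Type*} (hμ : ∀ v a, 0 ≤ actProb nA p (γ v) a) (s : Finset ι)
    {E : (V → Act nA) → Prop} (A : ι → (V → Act nA) → Prop) (hE : ∀ f, E f → ∃ x ∈ s, A x f) :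
    roundPr nA p γ E ≤ ∑ x ∈ s, roundPr nA p γ (A x) := by
  classical
  unfold roundPr
  rw [sum_comm]
  refine sum_le_sum fun f _ => ?_
  have hP : 0 ≤ ∏ v, actProb nA p (γ v) (f v) := prod_nonneg fun v _ => hμ v (f v)
  have hnn : ∀ x ∈ s, 0 ≤ if A x f then ∏ v, actProb nA p (γ v) (f v) else 0 :=
    fun x _ => ite_nonneg hP le_rfl
  split_ifs with h
  · obtain ⟨x, hx, hA⟩ := hE f h
    exact (if_pos hA).symm.trans_le (single_le_sum hnn hx)
  · exact sum_nonneg hnn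

lemma roundPr_forall_mem (T : V → Finset (Act nA)) :
    roundPr nA p γ (fun f => ∀ v, f v ∈ T v) = ∏ v, ∑ a ∈ T v, actProb nA p (γ v) a := by
  classical
  calc roundPr nA p γ (fun f => ∀ v, f v ∈ T v)
      = ∑ f : V → Act nA, ∏ v, if f v ∈ T v then actProb nA p (γ v) (f v) else 0 := by
        refine sum_congr rfl fun f _ => ?_
        rw [Fintype.prod_ite_zero]
        congr
    _ = ∏ v, ∑ a, if a ∈ T v then actProb nA p (γ v) a else 0 :=
        (Fintype.prod_sum fun v a => if a ∈ T v then actProb nA p (γ v) a else 0).symm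
    _ = ∏ v, ∑ a ∈ T v, actProb nA p (γ v) a := by simp only [sum_ite_mem, univ_inter]

end RoundProbability

section Reception

variable {V : Type*} [Fintype V] [DecidableEq V] (G : SimpleGraph V) [DecidableRel G.Adj]
  {nA : ℕ} {p : ℝ} {γ : V → ℝ}

def soleSenderCylinder (i : Fin nA) (x w v : V) : Finset (Act nA) :=
  if v = x then {some (i, false)}
  else if v = w then {some (i, true)}
  else if G.Adj x v then univ.erase (some (i, true))
  else univ

lemma exists_forall_mem_soleSenderCylinder {f : V → Act nA} {x : V} {i : Fin nA}
    (h : receivesOn G f x i) :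
    ∃ w ∈ G.neighborFinset x, ∀ v, f v ∈ soleSenderCylinder G i x w v := by
  classical
  obtain ⟨hlisten, hcard⟩ := h
  obtain ⟨w, hw⟩ := card_eq_one.1 hcard
  obtain ⟨hw_mem, hw_unique⟩ := eq_singleton_iff_unique_mem.1 hw
  obtain ⟨hxw, hbw⟩ := mem_filter.1 hw_mem
  refine ⟨w, hxw, fun v => ?_⟩
  unfold soleSenderCylinder
  split_ifs with hvx hvw hxv
  · subst hvx; exact mem_singleton.2 hlisten
  · subst hvw; exact mem_singleton.2 hbw
  · refine mem_erase.2 ⟨fun hbv => hvw (hw_unique v (mem_filter.2 ⟨?_, hbv⟩)), mem_univ _⟩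
    exact (G.mem_neighborFinset x v).2 hxv
  · exact mem_univ _

lemma prod_soleSenderCylinder (p : ℝ) (γ : V → ℝ) (i : Fin nA) {x w : V} (hw : G.Adj x w) :
    ∏ v, ∑ a ∈ soleSenderCylinder G i x w v, actProb nA p (γ v) a =
      p * γ x * (1 / 2) ^ (i.1 + 1) * ((1 - p) * γ w * (1 / 2) ^ (i.1 + 1) *
        ∏ v ∈ (G.neighborFinset x).erase w, (1 - (1 - p) * γ v * (1 / 2) ^ (i.1 + 1))) := by
  set F : V → ℝ := fun v => ∑ a ∈ soleSenderCylinder G i x w v, actProb nA p (γ v) a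
  have hF_out : ∀ v ∉ insert x (G.neighborFinset x), F v = 1 := fun v hv => by
    simp only [mem_insert, SimpleGraph.mem_neighborFinset, not_or] at hv
    have hvw : v ≠ w := by rintro rfl; exact hv.2 hw
    simp only [F, soleSenderCylinder, if_neg hv.1, if_neg hvw, if_neg hv.2, actProb_sum]
  have hF_nbr : ∀ v ∈ (G.neighborFinset x).erase w,
      F v = 1 - (1 - p) * γ v * (1 / 2) ^ (i.1 + 1) := fun v hv => by
    obtain ⟨hvw, hxv⟩ := mem_erase.1 hv
    rw [SimpleGraph.mem_neighborFinset] at hxv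
    simp only [F, soleSenderCylinder, if_neg hxv.ne', if_neg hvw, if_pos hxv]
    rw [sum_erase_eq_sub (mem_univ _), actProb_sum, ← two_zpow_neg_succ]
    rfl
  rw [← prod_subset (subset_univ _) fun v _ hv => hF_out v hv, prod_insert (by simp),
    ← mul_prod_erase _ _ ((G.mem_neighborFinset x w).2 hw), prod_congr rfl hF_nbr]
  simp only [F, soleSenderCylinder, ↓reduceIte, if_neg hw.ne', sum_singleton, actProb,
    two_zpow_neg_succ]

lemma roundPr_receivesOn_le (hp0 : 0 ≤ p) (hp1 : p ≤ 1) (hγ0 : ∀ v, 0 ≤ γ v)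
    (hγ1 : ∀ v, γ v ≤ 1 / 2) (x : V) (i : Fin nA) :
    roundPr nA p γ (fun f => receivesOn G f x i) ≤
      2 * p * γ x * ((1 / 2) ^ (i.1 + 1) * ((1 - p) * GamO G γ x * (1 / 2) ^ (i.1 + 1) *
        exp (-((1 - p) * GamO G γ x * (1 / 2) ^ (i.1 + 1))))) := by
  have hμ (v : V) : ∀ a, 0 ≤ actProb nA p (γ v) a :=
    actProb_nonneg hp0 hp1 (hγ0 v) (by linarith [hγ1 v])
  set N := G.neighborFinset x
  set t : ℝ := (1 / 2) ^ (i.1 + 1)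
  set q : V → ℝ := fun v => (1 - p) * γ v * t
  have ht : 0 ≤ t ∧ t ≤ 1 / 2 :=
    ⟨by positivity, pow_le_of_le_one (by norm_num) (by norm_num) (Nat.succ_ne_zero _)⟩
  have hq0 (v : V) : 0 ≤ q v := mul_nonneg (mul_nonneg (by linarith) (hγ0 v)) ht.1
  have hq (v : V) : q v ≤ 1 / 4 := calc
    q v ≤ 1 * (1 / 2) * (1 / 2) :=
      mul_le_mul (mul_le_mul (by linarith) (hγ1 v) (hγ0 v) zero_le_one) ht.2 ht.1 (by norm_num)
    _ = 1 / 4 := by norm_num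
  have hsum_q : ∑ v ∈ N, q v = (1 - p) * GamO G γ x * t := by
    simp only [q, N, GamO, ← sum_mul, ← mul_sum]
  calc roundPr nA p γ (fun f => receivesOn G f x i)
      ≤ ∑ w ∈ N, roundPr nA p γ (fun f => ∀ v, f v ∈ soleSenderCylinder G i x w v) :=
        roundPr_le_sum hμ _ _ fun f h => exists_forall_mem_soleSenderCylinder G h
    _ = ∑ w ∈ N, p * γ x * t * (q w * ∏ v ∈ N.erase w, (1 - q v)) :=
        sum_congr rfl fun w hw => by
          rw [roundPr_forall_mem, prod_soleSenderCylinder G p γ i ((G.mem_neighborFinset x w).1 hw)]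
    _ ≤ ∑ w ∈ N, p * γ x * t * (q w * (2 * exp (-∑ v ∈ N, q v))) :=
        sum_le_sum fun w hw => mul_le_mul_of_nonneg_left (mul_le_mul_of_nonneg_left
          (prod_erase_one_sub_le_two_mul_exp (fun v _ => hq v) hw) (hq0 w))
          (mul_nonneg (mul_nonneg hp0 (hγ0 x)) ht.1)
    _ = 2 * p * γ x * (t * ((1 - p) * GamO G γ x * t * exp (-((1 - p) * GamO G γ x * t)))) := by
        rw [hsum_q, ← mul_sum, ← sum_mul, hsum_q]
        ring

lemma roundPr_receives_le (hp0 : 0 ≤ p) (hp1 : p ≤ 1) (hγ0 : ∀ v, 0 ≤ γ v)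
    (hγ1 : ∀ v, γ v ≤ 1 / 2) (x : V) :
    roundPr nA p γ (fun f => receives G f x) ≤
      2 * p * γ x * dyadicExpSum nA ((1 - p) * GamO G γ x) := by
  have hμ (v : V) : ∀ a, 0 ≤ actProb nA p (γ v) a :=
    actProb_nonneg hp0 hp1 (hγ0 v) (by linarith [hγ1 v])
  calc roundPr nA p γ (fun f => receives G f x)
      ≤ ∑ i : Fin nA, roundPr nA p γ (fun f => receivesOn G f x i) :=
        roundPr_le_sum hμ univ _ fun f ⟨i, hi⟩ => ⟨i, mem_univ i, hi⟩
    _ ≤ _ := sum_le_sum fun i _ => roundPr_receivesOn_le G hp0 hp1 hγ0 hγ1 x i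
    _ = 2 * p * γ x * dyadicExpSum nA ((1 - p) * GamO G γ x) := by
        rw [← mul_sum, dyadicExpSum, Fin.sum_univ_eq_sum_range (fun i => (1 / 2 : ℝ) ^ (i + 1) *
          ((1 - p) * GamO G γ x * (1 / 2) ^ (i + 1) *
            exp (-((1 - p) * GamO G γ x * (1 / 2) ^ (i + 1)))))]

lemma Gam_eq_add_GamO (γ : V → ℝ) (x : V) : Gam G γ x = γ x + GamO G γ x :=
  sum_insert (by simp)

lemma roundPr_receives_le_div_Gam (hp0 : 0 ≤ p) (hp1 : p ≤ 1 / 2) (hγ0 : ∀ v, 0 ≤ γ v)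
    (hγ1 : ∀ v, γ v ≤ 1 / 2) (x : V) :
    roundPr nA p γ (fun f => receives G f x) ≤ 201 * p * (γ x / Gam G γ x) := by
  set r := (1 - p) * GamO G γ x
  set D := dyadicExpSum nA r
  have hbound := roundPr_receives_le G hp0 (by linarith) hγ0 hγ1 x (nA := nA)
  have hGamO : 0 ≤ GamO G γ x := sum_nonneg fun v _ => hγ0 v
  have hr : 0 ≤ r := mul_nonneg (by linarith) hGamO
  have hD0 : 0 ≤ D := dyadicExpSum_nonneg nA hr
  have hD1 : D ≤ 1 := dyadicExpSum_le_one nA r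
  have hrD : r * D ≤ 50 := mul_dyadicExpSum_le nA hr
  rcases (hγ0 x).eq_or_lt with hγx | hγx
  · simpa [← hγx] using hbound
  have hGam : 0 < Gam G γ x := by rw [Gam_eq_add_GamO]; linarith
  rw [← mul_div_assoc, le_div_iff₀ hGam, Gam_eq_add_GamO]
  have hfactor : D * (γ x + GamO G γ x) ≤ 201 / 2 := by
    have hself : D * γ x ≤ 1 * (1 / 2) := mul_le_mul hD1 (hγ1 x) (hγ0 x) zero_le_one
    -- `Γ°(x) ≤ 2 r` because `π_ℓ ≤ 1/2`
    have hnbrs : D * GamO G γ x ≤ 2 * (r * D) := by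
      have : 2 * (r * D) - D * GamO G γ x = D * GamO G γ x * (1 - 2 * p) := by ring
      nlinarith [mul_nonneg (mul_nonneg hD0 hGamO) (by linarith : (0 : ℝ) ≤ 1 - 2 * p)]
    linarith
  calc roundPr nA p γ (fun f => receives G f x) * (γ x + GamO G γ x)
      ≤ 2 * p * γ x * D * (γ x + GamO G γ x) := by gcongr
    _ = 2 * p * γ x * (D * (γ x + GamO G γ x)) := by ring
    _ ≤ 2 * p * γ x * (201 / 2) := by gcongr
    _ = 201 * p * γ x := by ring

end Reception

lemma card_le_indepNumOn {V : Type*} [Fintype V] (G : SimpleGraph V) {S : Set V} {I : Finset V}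
    (hIS : ↑I ⊆ S) (hI : G.IsIndepSet I) :
    #I ≤ indepNumOn G S :=
  le_csSup ⟨Fintype.card V, by rintro _ ⟨t, -, -, rfl⟩; exact card_le_univ t⟩
    ⟨I, hIS, fun _ ha _ hb hab => hI ha hb hab, rfl⟩

section CaroWei

variable {V : Type*} [Fintype V] [DecidableEq V] (G : SimpleGraph V) [DecidableRel G.Adj]

noncomputable def closedNbhdWeight (w : V → ℝ) (s : Finset V) (x : V) : ℝ :=
  ∑ y ∈ s ∩ insert x (G.neighborFinset x), w y

variable {w : V → ℝ}

lemma sum_div_closedNbhdWeight_le_one (hw : ∀ v, 0 ≤ w v) {s : Finset V} {x₀ : V}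
    (hx₀ : x₀ ∈ s) (hpos : 0 < w x₀)
    (hmin : ∀ y ∈ s, 0 < w y → closedNbhdWeight G w s x₀ ≤ closedNbhdWeight G w s y) :
    ∑ y ∈ s ∩ insert x₀ (G.neighborFinset x₀), w y / closedNbhdWeight G w s y ≤ 1 := by
  have hW₀ : 0 < closedNbhdWeight G w s x₀ :=
    hpos.trans_le (single_le_sum (fun y _ => hw y) (mem_inter.2 ⟨hx₀, mem_insert_self _ _⟩))
  calc ∑ y ∈ s ∩ insert x₀ (G.neighborFinset x₀), w y / closedNbhdWeight G w s y
      ≤ ∑ y ∈ s ∩ insert x₀ (G.neighborFinset x₀), w y / closedNbhdWeight G w s x₀ :=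
        sum_le_sum fun y hy => by
          rcases (hw y).eq_or_lt with h | h
          · simp [← h]
          · exact div_le_div_of_nonneg_left (hw y) hW₀ (hmin y (mem_inter.1 hy).1 h)
    _ = 1 := by rw [← sum_div]; exact div_self hW₀.ne'

/-- Weighted Caro–Wei: greedily pick a vertex of least closed-neighbourhood weight and recurse on
the rest of `s` outside its closed neighbourhood. -/
theorem exists_isIndepSet_sum_div_closedNbhdWeight_le (hw : ∀ v, 0 ≤ w v) (s : Finset V) :
    ∃ I ⊆ s, G.IsIndepSet I ∧ ∑ x ∈ s, w x / closedNbhdWeight G w s x ≤ #I := by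
  induction s using Finset.strongInduction with
  | H s ih =>
  by_cases hpos : ∃ x ∈ s, 0 < w x
  swap
  · push Not at hpos
    refine ⟨∅, empty_subset _, by simp, ?_⟩
    rw [card_empty, Nat.cast_zero]
    exact (sum_eq_zero fun x hx => by rw [le_antisymm (hpos x hx) (hw x), zero_div]).le
  obtain ⟨x₀, hx₀, hmin⟩ := exists_min_image (s.filter (0 < w ·)) (closedNbhdWeight G w s)
    (by simpa [Finset.Nonempty] using hpos)
  rw [mem_filter] at hx₀
  set N₀ := s ∩ insert x₀ (G.neighborFinset x₀)
  have hx₀N₀ : x₀ ∈ N₀ := mem_inter.2 ⟨hx₀.1, mem_insert_self _ _⟩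
  obtain ⟨I, hIs, hI, hsum⟩ := ih (s \ N₀) (sdiff_ssubset inter_subset_left ⟨x₀, hx₀N₀⟩)
  refine ⟨insert x₀ I, insert_subset hx₀.1 (hIs.trans sdiff_subset), ?_, ?_⟩
  · have hnonadj : ∀ b ∈ I, ¬G.Adj x₀ b := fun b hb hadj => by
      obtain ⟨hbs, hbN₀⟩ := mem_sdiff.1 (hIs hb)
      exact hbN₀ (mem_inter.2 ⟨hbs, mem_insert_of_mem ((G.mem_neighborFinset x₀ b).2 hadj)⟩)
    rw [coe_insert, SimpleGraph.IsIndepSet, Set.pairwise_insert]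
    exact ⟨hI, fun b hb _ => ⟨hnonadj b hb, fun hadj => hnonadj b hb hadj.symm⟩⟩
  · have hN₀ : ∑ x ∈ N₀, w x / closedNbhdWeight G w s x ≤ 1 :=
      sum_div_closedNbhdWeight_le_one G hw hx₀.1 hx₀.2
        fun y hy hy' => hmin y (mem_filter.2 ⟨hy, hy'⟩)
    have hrest : ∑ x ∈ s \ N₀, w x / closedNbhdWeight G w s x
        ≤ ∑ x ∈ s \ N₀, w x / closedNbhdWeight G w (s \ N₀) x :=
      sum_le_sum fun x hx => div_sum_le_div_sum_of_subset hw
        (inter_subset_inter_right sdiff_subset) (mem_inter.2 ⟨hx, mem_insert_self _ _⟩)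
    rw [← sum_sdiff (inter_subset_left : N₀ ⊆ s),
      card_insert_of_notMem fun h => (mem_sdiff.1 (hIs h)).2 hx₀N₀]
    push_cast
    linarith

end CaroWei

theorem exists_isIndepSet_roundPr_exists_receives_le {V : Type*} [Fintype V] [DecidableEq V]
    (G : SimpleGraph V) [DecidableRel G.Adj] {nA : ℕ} {p : ℝ} {γ : V → ℝ} (hp0 : 0 ≤ p)
    (hp1 : p ≤ 1 / 2) (hγ0 : ∀ v, 0 ≤ γ v) (hγ1 : ∀ v, γ v ≤ 1 / 2) (s : Finset V) :
    ∃ I ⊆ s, G.IsIndepSet I ∧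
      roundPr nA p γ (fun f => ∃ x ∈ s, receives G f x) ≤ 201 * p * #I := by
  have hμ (v : V) : ∀ a, 0 ≤ actProb nA p (γ v) a :=
    actProb_nonneg hp0 (by linarith) (hγ0 v) (by linarith [hγ1 v])
  obtain ⟨I, hIs, hI, hsum⟩ := exists_isIndepSet_sum_div_closedNbhdWeight_le G hγ0 s
  refine ⟨I, hIs, hI, ?_⟩
  calc roundPr nA p γ (fun f => ∃ x ∈ s, receives G f x)
      ≤ ∑ x ∈ s, roundPr nA p γ (fun f => receives G f x) := roundPr_le_sum hμ s _ fun _ h => h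
    _ ≤ ∑ x ∈ s, 201 * p * (γ x / Gam G γ x) :=
        sum_le_sum fun x _ => roundPr_receives_le_div_Gam G hp0 hp1 hγ0 hγ1 x
    _ ≤ ∑ x ∈ s, 201 * p * (γ x / closedNbhdWeight G γ s x) :=
        sum_le_sum fun x hx => mul_le_mul_of_nonneg_left (div_sum_le_div_sum_of_subset hγ0
          inter_subset_right (mem_inter.2 ⟨hx, mem_insert_self _ _⟩)) (by positivity)
    _ = 201 * p * ∑ x ∈ s, γ x / closedNbhdWeight G γ s x := by rw [mul_sum]
    _ ≤ 201 * p * #I := by gcongr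

/-- There is an absolute constant `c > 0` such that in the herald-protocol round model, for
every vertex `u` and every `k ≥ 1`, the probability that some vertex of `N^k(u)` receives a
message is at most `c · π_ℓ · α(G[N^k(u)])`. -/
theorem stmt_10 : ∃ c : ℝ, 0 < c ∧
    ∀ (V : Type) [Fintype V] [DecidableEq V] (G : SimpleGraph V) [DecidableRel G.Adj]
      (nA : ℕ), 1 ≤ nA →
      ∀ pl : ℝ, 0 < pl → pl ≤ 1 / 2 →
      ∀ γ : V → ℝ, (∀ x, 0 ≤ γ x ∧ γ x ≤ 1 / 2) →
      ∀ (u : V) (k : ℕ), 1 ≤ k →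
      roundPr nA pl γ (fun f => ∃ x ∈ ball G u k, receives G f x) ≤
        c * pl * (indepNumOn G (ball G u k) : ℝ) := by
  refine ⟨201, by norm_num, fun V _ _ G _ nA _ pl hpl hpl2 γ hγ u k _ => ?_⟩
  set S := (ball G u k).toFinite.toFinset
  obtain ⟨I, hIS, hI, hbound⟩ := exists_isIndepSet_roundPr_exists_receives_le G (nA := nA)
    hpl.le hpl2 (fun v => (hγ v).1) (fun v => (hγ v).2) S
  have hball : ∀ f : V → Act nA, (∃ x ∈ ball G u k, receives G f x) ↔ ∃ x ∈ S, receives G f x :=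
    fun f => by simp [S]
  calc roundPr nA pl γ (fun f => ∃ x ∈ ball G u k, receives G f x)
      = roundPr nA pl γ (fun f => ∃ x ∈ S, receives G f x) := by simp only [hball]
    _ ≤ 201 * pl * #I := hbound
    _ ≤ 201 * pl * indepNumOn G (ball G u k) := by
        gcongr
        exact card_le_indepNumOn G (by simpa [S] using hIS) hI
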